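/- Let d ≥ 2, p, q ∈ [0,1], and γ ≥ 1. Define the normalized Choi state of the depolarizing channel with parameter p on ℂ^d ⊗ ℂ^d by ρ_p := (1−p)·Φ + (p/d²)·I, where Φ is the maximally entangled state. Then the PPT-measured hockey-stick divergence satisfies E_γ^PPT(ρ_q‖ρ_p) = max{0, (1−q) − γ(1−p) + (q − γp)/d, ((d−1)/d)·(q − γp)} (equivalently, this is the PPT-measured hockey-stick channel divergence between the depolarizing channels with parameters q and p). -/

import Mathlib

/-!
Write `t = Tr[M Φ]` and `u = Tr[M (I - d Φ)]`. Since `ρ_q - γ ρ_p = A Φ + b (I - d Φ)` with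
`A = (1 - q) - γ (1 - p) + (q - γ p) / d` and `b = (q - γ p) / d²`, the objective is
`A t + b u`. Testing `M` and `I - M` against the projection `Φ` gives `t ∈ [0, 1]`; testing
`T_B(M)` and `T_B(I - M)` against `I - F` (`F` the swap, `T_B(I - F) = I - d Φ`) gives
`u ∈ [0, d (d - 1)]`. On this box the corner `(1, d (d - 1))` has value `1 - γ ≤ 0`, so the
maximum is attained at one of the other three corners; they are realised by the PPT effects
`0`, `I - W` and `W = d / (d + 1) (I - Φ)`.
-/

noncomputable section
open Matrix ComplexOrder

/-- Bipartite complex matrices on ℂ^d ⊗ ℂ^d. -/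
abbrev BMat (d : ℕ) := Matrix (Fin d × Fin d) (Fin d × Fin d) ℂ

/-- The maximally entangled state `Φ = (1/d) Σ_{i,j} |i⟩⟨j| ⊗ |i⟩⟨j|`. -/
def maxEnt (d : ℕ) : BMat d :=
  fun p q => if p.1 = p.2 ∧ q.1 = q.2 then ((d : ℂ))⁻¹ else 0

/-- The normalized Choi state of the depolarizing channel with parameter `p`:
`ρ_p = (1−p)Φ + (p/d²)I`. -/
def depolChoi (d : ℕ) (p : ℝ) : BMat d :=
  ((1 - p : ℝ) : ℂ) • maxEnt d + ((p / (d : ℝ) ^ 2 : ℝ) : ℂ) • (1 : BMat d)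

/-- The partial transpose on the second tensor factor:
`T_B(M)((a,b),(a',b')) := M((a,b'),(a',b))`. -/
def ptB {d : ℕ} (M : BMat d) : BMat d :=
  fun p q => M (p.1, q.2) (q.1, p.2)

/-- PPT-measured hockey-stick divergence for γ ≥ 1. -/
def EgPPT {d : ℕ} (γ : ℝ) (ρ σ : BMat d) : ℝ :=
  sSup {x : ℝ | ∃ M : BMat d, M.PosSemidef ∧ ((1 : BMat d) - M).PosSemidef ∧
    (ptB M).PosSemidef ∧ ((1 : BMat d) - ptB M).PosSemidef ∧
    x = ((M * (ρ - (γ : ℂ) • σ)).trace).re}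

theorem IsStarProjection.posSemidef {n 𝕜 : Type*} [Fintype n] [RCLike 𝕜] {P : Matrix n n 𝕜}
    (hP : IsStarProjection P) : P.PosSemidef := by
  classical
  open scoped MatrixOrder in exact nonneg_iff_posSemidef.mp hP.nonneg

namespace Matrix

variable {n 𝕜 : Type*} [Fintype n] [RCLike 𝕜]

theorem posSemidef_one_add_of_mul_self_eq_one [DecidableEq n] {U : Matrix n n 𝕜}
    (hU : U.IsHermitian) (hU2 : U * U = 1) : (1 + U).PosSemidef := by
  have h : 1 + U = (2⁻¹ : ℝ) • ((1 + U)ᴴ * (1 + U)) := by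
    rw [conjTranspose_add, conjTranspose_one, hU.eq, add_mul, mul_add, mul_add, hU2,
      Matrix.one_mul, Matrix.mul_one, Matrix.one_mul]
    module
  rw [h]
  exact (posSemidef_conjTranspose_mul_self _).smul (by norm_num)

theorem posSemidef_one_sub_of_mul_self_eq_one [DecidableEq n] {U : Matrix n n 𝕜}
    (hU : U.IsHermitian) (hU2 : U * U = 1) : (1 - U).PosSemidef := by
  simpa [sub_eq_add_neg] using posSemidef_one_add_of_mul_self_eq_one hU.neg (by simpa using hU2)

theorem PosSemidef.trace_mul_nonneg {A B : Matrix n n 𝕜} (hA : A.PosSemidef)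
    (hB : B.PosSemidef) : 0 ≤ (A * B).trace := by
  classical
  obtain ⟨C, rfl⟩ : ∃ C : Matrix n n 𝕜, A = Cᴴ * C := by
    open scoped MatrixOrder in
    exact CStarAlgebra.nonneg_iff_eq_star_mul_self.mp hA.nonneg
  rw [Matrix.mul_assoc, trace_mul_comm]
  exact (hB.mul_mul_conjTranspose_same C).trace_nonneg

theorem PosSemidef.re_trace_mul_nonneg {A B : Matrix n n 𝕜} (hA : A.PosSemidef)
    (hB : B.PosSemidef) : 0 ≤ RCLike.re (A * B).trace :=
  (RCLike.nonneg_iff.mp (hA.trace_mul_nonneg hB)).1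

end Matrix

theorem add_mul_le_max_of_mem_Icc {a b K t u : ℝ} (ht : t ∈ Set.Icc 0 1)
    (hu : u ∈ Set.Icc 0 K) (hab : a + b * K ≤ 0) :
    a * t + b * u ≤ max 0 (max a (b * K)) := by
  obtain ⟨ht0, ht1⟩ := ht
  obtain ⟨hu0, huK⟩ := hu
  rcases le_total 0 a with ha | ha <;> rcases le_total 0 b with hb | hb
  · nlinarith [le_max_left a (b * K), le_max_right 0 (max a (b * K))]
  · nlinarith [le_max_left a (b * K), le_max_right 0 (max a (b * K))]
  · nlinarith [le_max_right a (b * K), le_max_right 0 (max a (b * K))]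
  · nlinarith [le_max_left 0 (max a (b * K))]

section

variable {d : ℕ}

def swapMat (d : ℕ) : BMat d := fun p q => if p.1 = q.2 ∧ p.2 = q.1 then 1 else 0

theorem isStarProjection_maxEnt (hd : 0 < d) : IsStarProjection (maxEnt d) := by
  refine ⟨?_, ?_⟩
  · ext p q
    simp only [mul_apply, maxEnt, ite_mul, mul_ite, zero_mul, mul_zero]
    by_cases h1 : p.1 = p.2 <;> by_cases h2 : q.1 = q.2 <;>
      simp [h1, h2, Fintype.sum_prod_type, Finset.sum_ite_eq, Finset.card_univ, hd.ne']
  · ext p q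
    simp only [star_apply, maxEnt, apply_ite, star_zero, star_inv₀, RCLike.star_def,
      Complex.conj_natCast]
    by_cases h1 : p.1 = p.2 <;> by_cases h2 : q.1 = q.2 <;> simp [h1, h2]

theorem trace_maxEnt (hd : 0 < d) : (maxEnt d).trace = 1 := by
  simp [Matrix.trace, maxEnt, Fintype.sum_prod_type, Finset.sum_ite_eq, hd.ne']

theorem isHermitian_swapMat : (swapMat d).IsHermitian := by
  ext ⟨a, b⟩ ⟨c, e⟩
  simp [swapMat, and_comm, eq_comm]

theorem swapMat_mul_self : swapMat d * swapMat d = 1 := by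
  ext ⟨a, b⟩ ⟨c, e⟩
  simp [mul_apply, swapMat, ite_and, Fintype.sum_prod_type, one_apply, Prod.ext_iff, and_comm,
    eq_comm]

theorem posSemidef_one_add_swapMat : (1 + swapMat d).PosSemidef :=
  posSemidef_one_add_of_mul_self_eq_one isHermitian_swapMat swapMat_mul_self

theorem posSemidef_one_sub_swapMat : (1 - swapMat d).PosSemidef :=
  posSemidef_one_sub_of_mul_self_eq_one isHermitian_swapMat swapMat_mul_self

@[simp] theorem ptB_zero : ptB (0 : BMat d) = 0 := rfl

@[simp] theorem ptB_sub (M N : BMat d) : ptB (M - N) = ptB M - ptB N := rfl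

@[simp] theorem ptB_smul (c : ℝ) (M : BMat d) : ptB (c • M) = c • ptB M := rfl

@[simp] theorem ptB_one : ptB (1 : BMat d) = 1 := by
  ext ⟨a, b⟩ ⟨c, e⟩
  by_cases h1 : a = c <;> by_cases h2 : b = e <;> simp [ptB, one_apply, h1, h2, eq_comm]

theorem ptB_maxEnt : ptB (maxEnt d) = (d : ℝ)⁻¹ • swapMat d := by
  ext ⟨a, b⟩ ⟨c, e⟩
  by_cases h1 : a = e <;> by_cases h2 : b = c <;> simp [ptB, maxEnt, swapMat, h1, h2, eq_comm]

theorem ptB_swapMat : ptB (swapMat d) = (d : ℝ) • maxEnt d := by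
  ext ⟨a, b⟩ ⟨c, e⟩
  by_cases h1 : a = b <;> by_cases h2 : c = e <;>
    simp [ptB, maxEnt, swapMat, h1, h2, eq_comm, (Nat.cast_ne_zero.mpr a.pos.ne' : (d : ℂ) ≠ 0)]

theorem trace_ptB_mul (M N : BMat d) : (ptB M * N).trace = (M * ptB N).trace := by
  simp only [Matrix.trace, diag, mul_apply, ptB, Fintype.sum_prod_type]
  refine Finset.sum_congr rfl fun a _ => ?_
  calc _ = ∑ b : Fin d, ∑ e : Fin d, ∑ c : Fin d, M (a, e) (c, b) * N (c, e) (a, b) :=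
        Finset.sum_congr rfl fun b _ => Finset.sum_comm
    _ = ∑ e : Fin d, ∑ c : Fin d, ∑ b : Fin d, M (a, e) (c, b) * N (c, e) (a, b) := by
        rw [Finset.sum_comm]
        exact Finset.sum_congr rfl fun e _ => Finset.sum_comm

theorem re_trace_mul_ptB_nonneg {M N : BMat d} (hM : (ptB M).PosSemidef) (hN : N.PosSemidef) :
    0 ≤ ((M * ptB N).trace).re := by
  rw [← trace_ptB_mul]
  exact hM.re_trace_mul_nonneg hN

def IsPPTEffect (M : BMat d) : Prop :=
  M.PosSemidef ∧ (1 - M).PosSemidef ∧ (ptB M).PosSemidef ∧ (1 - ptB M).PosSemidef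

theorem IsPPTEffect.one_sub {M : BMat d} (hM : IsPPTEffect M) : IsPPTEffect (1 - M) := by
  obtain ⟨h₁, h₂, h₃, h₄⟩ := hM
  exact ⟨h₂, by simpa using h₁, by simpa using h₄, by simpa using h₃⟩

theorem EgPPT_eq_sSup_image (γ : ℝ) (ρ σ : BMat d) :
    EgPPT γ ρ σ =
      sSup ((fun M => ((M * (ρ - (γ : ℂ) • σ)).trace).re) '' {M | IsPPTEffect M}) := by
  simp only [EgPPT, IsPPTEffect, Set.image, Set.mem_ofPred_eq, and_assoc, eq_comm]

theorem IsPPTEffect.re_trace_mul_maxEnt_mem_Icc (hd : 0 < d) {M : BMat d} (hM : IsPPTEffect M) :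
    ((M * maxEnt d).trace).re ∈ Set.Icc 0 1 := by
  have hΦ := (isStarProjection_maxEnt hd).posSemidef
  have h₁ := hM.2.1.re_trace_mul_nonneg hΦ
  rw [Matrix.sub_mul, Matrix.one_mul, trace_sub, trace_maxEnt hd] at h₁
  exact ⟨hM.1.re_trace_mul_nonneg hΦ, by simpa using h₁⟩

theorem trace_one_sub_smul_maxEnt (hd : 0 < d) :
    ((1 : BMat d) - (d : ℝ) • maxEnt d).trace = ((d * (d - 1) : ℝ) : ℂ) := by
  rw [trace_sub, trace_one, trace_smul, trace_maxEnt hd]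
  push_cast [Fintype.card_prod, Fintype.card_fin, Complex.real_smul]
  ring

theorem IsPPTEffect.re_trace_mul_one_sub_smul_maxEnt_mem_Icc (hd : 0 < d) {M : BMat d}
    (hM : IsPPTEffect M) :
    ((M * (1 - (d : ℝ) • maxEnt d)).trace).re ∈ Set.Icc 0 ((d : ℝ) * (d - 1)) := by
  have hptB : ptB (1 - swapMat d) = 1 - (d : ℝ) • maxEnt d := by simp [ptB_swapMat]
  have h₀ := re_trace_mul_ptB_nonneg hM.2.2.1 posSemidef_one_sub_swapMat
  have h₁ := re_trace_mul_ptB_nonneg hM.one_sub.2.2.1 posSemidef_one_sub_swapMat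
  rw [hptB] at h₀ h₁
  rw [Matrix.sub_mul, Matrix.one_mul, trace_sub, trace_one_sub_smul_maxEnt hd] at h₁
  exact ⟨h₀, by simpa using h₁⟩

theorem isPPTEffect_zero : IsPPTEffect (0 : BMat d) :=
  ⟨.zero, by simpa using .one, .zero, by simpa using .one⟩

def extremalPPTEffect (d : ℕ) : BMat d := ((d : ℝ) / (d + 1)) • (1 - maxEnt d)

theorem isPPTEffect_extremalPPTEffect (hd : 0 < d) : IsPPTEffect (extremalPPTEffect d) := by
  have hΦ := isStarProjection_maxEnt hd
  set c : ℝ := 1 / (d + 1)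
  have hc : 0 ≤ c := by positivity
  have hc₁ : 1 = ((d : ℝ) + 1) * c := by simp only [c]; field_simp
  have hW : extremalPPTEffect d = (d * c) • (1 - maxEnt d) := by
    rw [extremalPPTEffect, mul_one_div]
  have hptB : ptB (extremalPPTEffect d) = ((d - 1) * c) • 1 + c • (1 - swapMat d) := by
    have : (d : ℝ) * c * (d : ℝ)⁻¹ = c := by field_simp
    rw [hW, ptB_smul, ptB_sub, ptB_one, ptB_maxEnt, smul_sub, smul_smul, this]
    module
  refine ⟨?_, ?_, ?_, ?_⟩
  · rw [hW]
    exact hΦ.one_sub.posSemidef.smul (by positivity)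
  · have : 1 - extremalPPTEffect d = c • 1 + (d * c) • maxEnt d := by
      rw [hW]
      linear_combination (norm := module) hc₁ • (1 : BMat d)
    rw [this]
    exact (PosSemidef.one.smul hc).add (hΦ.posSemidef.smul (by positivity))
  · have : (0 : ℝ) ≤ (d - 1) * c := mul_nonneg (by simp [Nat.one_le_cast.mpr hd]) hc
    rw [hptB]
    exact (PosSemidef.one.smul this).add (posSemidef_one_sub_swapMat.smul hc)
  · have : 1 - ptB (extremalPPTEffect d) = c • (1 + swapMat d) := by
      rw [hptB]
      linear_combination (norm := module) hc₁ • (1 : BMat d)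
    rw [this]
    exact posSemidef_one_add_swapMat.smul hc

theorem extremalPPTEffect_mul_maxEnt (hd : 0 < d) : extremalPPTEffect d * maxEnt d = 0 := by
  rw [extremalPPTEffect, smul_mul_assoc, (isStarProjection_maxEnt hd).one_sub_mul_self, smul_zero]

theorem trace_extremalPPTEffect_mul_one_sub_smul_maxEnt (hd : 0 < d) :
    (extremalPPTEffect d * (1 - (d : ℝ) • maxEnt d)).trace = ((d * (d - 1) : ℝ) : ℂ) := by
  rw [Matrix.mul_sub, Matrix.mul_one, Matrix.mul_smul, extremalPPTEffect_mul_maxEnt hd,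
    smul_zero, sub_zero, extremalPPTEffect, trace_smul, trace_sub, trace_one, trace_maxEnt hd]
  have : (d : ℂ) + 1 ≠ 0 := by exact_mod_cast (Nat.succ_ne_zero d)
  push_cast [Fintype.card_prod, Fintype.card_fin, Complex.real_smul]
  field_simp
  ring

theorem EgPPT_eq_max_of_sub_eq (hd : 0 < d) {γ a b : ℝ} {ρ σ : BMat d}
    (hρσ : ρ - (γ : ℂ) • σ = a • maxEnt d + b • (1 - (d : ℝ) • maxEnt d))
    (hab : a + b * (d * (d - 1)) ≤ 0) :
    EgPPT γ ρ σ = max 0 (max a (b * (d * (d - 1)))) := by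
  have hvalue (M : BMat d) : ((M * (ρ - (γ : ℂ) • σ)).trace).re =
      a * ((M * maxEnt d).trace).re + b * ((M * (1 - (d : ℝ) • maxEnt d)).trace).re := by
    rw [hρσ, Matrix.mul_add, trace_add, Matrix.mul_smul, Matrix.mul_smul, trace_smul, trace_smul]
    simp
  rw [EgPPT_eq_sSup_image]
  set S := (fun M : BMat d => ((M * (ρ - (γ : ℂ) • σ)).trace).re) '' {M | IsPPTEffect M}
  refine IsGreatest.csSup_eq ⟨?_, ?_⟩
  · have h₀ : (0 : ℝ) ∈ S := ⟨0, isPPTEffect_zero, by simp⟩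
    have ha : a ∈ S := by
      refine ⟨1 - extremalPPTEffect d, (isPPTEffect_extremalPPTEffect hd).one_sub, ?_⟩
      dsimp only
      rw [hvalue, Matrix.sub_mul, Matrix.sub_mul, Matrix.one_mul, Matrix.one_mul, trace_sub,
        trace_sub, trace_maxEnt hd, extremalPPTEffect_mul_maxEnt hd,
        trace_one_sub_smul_maxEnt hd, trace_extremalPPTEffect_mul_one_sub_smul_maxEnt hd]
      simp
    have hb : b * (d * (d - 1)) ∈ S := by
      refine ⟨extremalPPTEffect d, isPPTEffect_extremalPPTEffect hd, ?_⟩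
      dsimp only
      rw [hvalue, extremalPPTEffect_mul_maxEnt hd,
        trace_extremalPPTEffect_mul_one_sub_smul_maxEnt hd]
      simp
    rcases max_choice 0 (max a (b * (d * (d - 1)))) with h | h <;> rw [h]
    · exact h₀
    · rcases max_choice a (b * (d * (d - 1))) with h' | h' <;> rw [h'] <;> assumption
  · rintro _ ⟨M, hM, rfl⟩
    dsimp only
    rw [hvalue]
    exact add_mul_le_max_of_mem_Icc (hM.re_trace_mul_maxEnt_mem_Icc hd)
      (hM.re_trace_mul_one_sub_smul_maxEnt_mem_Icc hd) hab

theorem depolChoi_sub_smul_depolChoi (hd : 0 < d) (p q γ : ℝ) :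
    depolChoi d q - (γ : ℂ) • depolChoi d p =
      ((1 - q) - γ * (1 - p) + (q - γ * p) / d) • maxEnt d +
        ((q - γ * p) / d ^ 2) • (1 - (d : ℝ) • maxEnt d) := by
  have h : (q - γ * p) / d - (q - γ * p) / d ^ 2 * d = 0 := by
    have : (d : ℝ) ≠ 0 := by positivity
    field_simp
    ring
  simp only [depolChoi, Complex.coe_smul]
  linear_combination (norm := module) -(h • maxEnt d)

end

theorem stmt_16_general (d : ℕ) (hd : 2 ≤ d) (p q : ℝ)
    (γ : ℝ) (hγ : 1 ≤ γ) :
    EgPPT γ (depolChoi d q) (depolChoi d p) =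
      max 0 (max ((1 - q) - γ * (1 - p) + (q - γ * p) / d)
        (((d - 1 : ℝ) / d) * (q - γ * p))) := by
  have hd₀ : 0 < d := by omega
  have hd' : (d : ℝ) ≠ 0 := by positivity
  have hK : (q - γ * p) / d ^ 2 * (d * (d - 1)) = ((d - 1 : ℝ) / d) * (q - γ * p) := by
    field_simp
  have hsum : (1 - q) - γ * (1 - p) + (q - γ * p) / d + ((d - 1 : ℝ) / d) * (q - γ * p) =
      1 - γ := by
    field_simp
    ring
  have hab :
      (1 - q) - γ * (1 - p) + (q - γ * p) / d + (q - γ * p) / d ^ 2 * (d * (d - 1)) ≤ 0 := by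
    rw [hK, hsum]
    linarith
  rw [EgPPT_eq_max_of_sub_eq hd₀ (depolChoi_sub_smul_depolChoi hd₀ p q γ) hab, hK]

/-- PPT-measured hockey-stick divergence between Choi states of depolarizing channels. -/
theorem stmt_16 (d : ℕ) (hd : 2 ≤ d) (p q : ℝ)
    (hp : p ∈ Set.Icc (0 : ℝ) 1) (hq : q ∈ Set.Icc (0 : ℝ) 1)
    (γ : ℝ) (hγ : 1 ≤ γ) :
    EgPPT γ (depolChoi d q) (depolChoi d p) =
      max 0 (max ((1 - q) - γ * (1 - p) + (q - γ * p) / d)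
        (((d - 1 : ℝ) / d) * (q - γ * p))) :=
  stmt_16_general d hd p q γ hγ
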